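/- arXiv:1806.07010 — 2 statements merged into one kernel-verified Lean document; each statement's English description precedes it below -/
import Mathlib

section
/- Let S be an F-subspace of F[G] closed under the Hadamard product, where F has characteristic zero. Then for every α ∈ S and every c ∈ F with c ≠ 0, the simple quantity of the coefficient complex K(α, c) = {g | α_g = c} lies in S. -/
/-- The Hadamard (coefficientwise) product on the group algebra. -/
noncomputable def hadamard {F G : Type*} [Semiring F]
    (α β : MonoidAlgebra F G) : MonoidAlgebra F G :=
  MonoidAlgebra.ofCoeff (Finsupp.zipWith (· * ·) (mul_zero 0) α.coeff β.coeff)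

/-- The simple quantity `C̄ = ∑_{g ∈ C} g` of a finite subset of `G`. -/
noncomputable def simpleQuantity (F : Type*) {G : Type*} [Semiring F] (C : Finset G) :
    MonoidAlgebra F G :=
  ∑ g ∈ C, MonoidAlgebra.single g 1

/-- A partition of `G` into finite (nonempty) classes, i.e. a partition of finite support. -/
structure FinPartition (G : Type*) where
  classes : Set (Finset G)
  nonempty : ∀ C ∈ classes, C.Nonempty
  existsUnique_mem : ∀ g : G, ∃! C, C ∈ classes ∧ g ∈ C

/-- The Schur module associated to a partition of finite support: the `F`-span of the
simple quantities of the classes. -/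
noncomputable def schurModule (F : Type*) {G : Type*} [Field F] (P : FinPartition G) :
    Submodule F (MonoidAlgebra F G) :=
  Submodule.span F (simpleQuantity F '' P.classes)

/-!
Hadamard powers of `α` have coefficients `α_g ^ (n + 1)`, so every polynomial without constant
term, applied coefficientwise to `α`, stays in `S`. Lagrange interpolation on the finitely many
values of `α` (together with `0`) yields such a polynomial equal to `1` at `c` and to `0` at every
other value; applied to `α` it gives the simple quantity of `K(α, c)`.
-/

open Polynomial

section Hadamard

variable {F G : Type*}

lemma hadamard_coeff [Semiring F] (α β : MonoidAlgebra F G) (g : G) :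
    (hadamard α β).coeff g = α.coeff g * β.coeff g := rfl

lemma simpleQuantity_coeff [Semiring F] [DecidableEq G] (K : Finset G) (g : G) :
    (simpleQuantity F K).coeff g = if g ∈ K then 1 else 0 := by
  simp only [simpleQuantity, MonoidAlgebra.coeff_sum, Finset.sum_apply', MonoidAlgebra.coeff_single,
    Finsupp.single_apply, Finset.sum_ite_eq']

noncomputable def hadamardPow [Semiring F] (α : MonoidAlgebra F G) : ℕ → MonoidAlgebra F G
  | 0 => α
  | n + 1 => hadamard α (hadamardPow α n)

lemma hadamardPow_coeff [CommSemiring F] (α : MonoidAlgebra F G) (n : ℕ) (g : G) :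
    (hadamardPow α n).coeff g = α.coeff g ^ (n + 1) := by
  induction n with
  | zero => simp [hadamardPow]
  | succ n ih => rw [hadamardPow, hadamard_coeff, ih, ← pow_succ']

variable [CommSemiring F] {S : Submodule F (MonoidAlgebra F G)}
  (hS : ∀ α ∈ S, ∀ β ∈ S, hadamard α β ∈ S)
include hS

lemma hadamardPow_mem {α : MonoidAlgebra F G} (hα : α ∈ S) (n : ℕ) : hadamardPow α n ∈ S := by
  induction n with
  | zero => exact hα
  | succ n ih => exact hS α hα _ ih

lemma exists_mem_coeff_eq_eval {α : MonoidAlgebra F G} (hα : α ∈ S) {p : F[X]}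
    (hp : p.coeff 0 = 0) : ∃ β ∈ S, ∀ g, β.coeff g = p.eval (α.coeff g) := by
  refine ⟨∑ k ∈ Finset.range p.natDegree, p.coeff (k + 1) • hadamardPow α k,
    S.sum_mem fun k _ => S.smul_mem _ (hadamardPow_mem hS hα k), fun g => ?_⟩
  simp only [MonoidAlgebra.coeff_sum, Finsupp.finsetSum_apply, MonoidAlgebra.coeff_smul_apply,
    hadamardPow_coeff, smul_eq_mul]
  rw [eval_eq_sum_range, Finset.sum_range_succ', hp, zero_mul, add_zero]

end Hadamard

lemma Finsupp.coe_filter_support_eq {ι R : Type*} [Zero R] (f : ι →₀ R) {c : R} (hc : c ≠ 0)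
    [DecidablePred (f · = c)] :
    ((f.support.filter (f · = c) : Finset ι) : Set ι) = {i | f i = c} := by
  ext i
  simp only [Finset.coe_filter, Finsupp.mem_support_iff, Set.mem_ofPred_eq, and_iff_right_iff_imp]
  rintro rfl
  exact hc

lemma Finsupp.exists_eval_eq_ite {ι F : Type*} [Field F] [DecidableEq F] (f : ι →₀ F) {c : F}
    (hc : c ≠ 0) : ∃ p : F[X], p.coeff 0 = 0 ∧ ∀ i, p.eval (f i) = if f i = c then 1 else 0 := by
  let V : Finset F := insert 0 (f.support.image f)
  let r : F → F := fun x => if x = c then 1 else 0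
  have eval_interpolate : ∀ x ∈ V, (Lagrange.interpolate V id r).eval x = r x := fun x hx =>
    Lagrange.eval_interpolate_at_node r Function.injective_id.injOn hx
  have apply_mem : ∀ i, f i ∈ V := fun i => by
    by_cases h : f i = 0
    · exact h ▸ Finset.mem_insert_self _ _
    · exact Finset.mem_insert_of_mem (Finset.mem_image_of_mem _ (Finsupp.mem_support_iff.mpr h))
  refine ⟨Lagrange.interpolate V id r, ?_, fun i => eval_interpolate _ (apply_mem i)⟩
  rw [coeff_zero_eq_eval_zero, eval_interpolate 0 (Finset.mem_insert_self _ _)]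
  exact if_neg hc.symm

theorem stmt6_general {F G : Type*} [Field F]
    (S : Submodule F (MonoidAlgebra F G))
    (hS : ∀ α ∈ S, ∀ β ∈ S, hadamard α β ∈ S)
    (α : MonoidAlgebra F G) (hα : α ∈ S) (c : F) (hc : c ≠ 0) :
    ∃ K : Finset G, (K : Set G) = {g : G | α.coeff g = c} ∧ simpleQuantity F K ∈ S := by
  classical
  refine ⟨α.coeff.support.filter (α.coeff · = c), α.coeff.coe_filter_support_eq hc, ?_⟩
  obtain ⟨p, hp0, hp⟩ := α.coeff.exists_eval_eq_ite hc
  obtain ⟨β, hβS, hβ⟩ := exists_mem_coeff_eq_eval hS hα hp0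
  convert hβS using 1
  ext g
  rw [simpleQuantity_coeff, hβ, hp]
  exact if_congr (Set.ext_iff.mp (α.coeff.coe_filter_support_eq hc) g) rfl rfl

theorem stmt6 {F G : Type*} [Field F] [CharZero F] [Group G]
    (S : Submodule F (MonoidAlgebra F G))
    (hS : ∀ α ∈ S, ∀ β ∈ S, hadamard α β ∈ S)
    (α : MonoidAlgebra F G) (hα : α ∈ S) (c : F) (hc : c ≠ 0) :
    ∃ K : Finset G, (K : Set G) = {g : G | α.coeff g = c} ∧ simpleQuantity F K ∈ S :=
  stmt6_general S hS α hα c hc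
end

section
/- Let S be a Schur ring over a group G and let α ∈ S. Then stab(α) = {g ∈ G | α·g = α} is an S-subgroup of G, i.e., a subgroup that is a union of classes of the partition associated to S. -/
/-- A Schur ring over a group `G` with coefficients in `F`, given by its partition
of finite support: `{1}` is a class, classes are closed under inversion, and the product
of two simple quantities is a finite `F`-linear combination of simple quantities. -/
structure SchurRing (F G : Type*) [Field F] [Group G] extends FinPartition G where
  one_mem : ({1} : Finset G) ∈ classes
  inv_mem : ∀ C ∈ classes, ∃ D ∈ classes, ∀ g : G, g ∈ D ↔ g⁻¹ ∈ C
  mul_mem : ∀ C ∈ classes, ∀ D ∈ classes,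
    simpleQuantity F C * simpleQuantity F D ∈
      Submodule.span F (simpleQuantity F '' classes)

/-- The underlying Schur ring, as a submodule of the group algebra. -/
noncomputable def SchurRing.carrier {F G : Type*} [Field F] [Group G] (S : SchurRing F G) :
    Submodule F (MonoidAlgebra F G) :=
  schurModule F S.toFinPartition

/-- A subset of `G` is an `S`-set if it is a union of classes of the partition. -/
def IsSSet {F G : Type*} [Field F] [Group G] (S : SchurRing F G) (X : Set G) : Prop :=
  ∃ E ⊆ S.classes, X = ⋃ C ∈ E, (C : Set G)

/-- The group ring `F[H]` of a subgroup, viewed inside `F[G]`. -/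
noncomputable def groupRingOf (F : Type*) {G : Type*} [Field F] [Group G] (H : Subgroup G) :
    Submodule F (MonoidAlgebra F G) :=
  Submodule.span F ((fun g => (MonoidAlgebra.single g 1 : MonoidAlgebra F G)) '' (H : Set G))

/-!
For `α ∈ S` and `t ≠ 0` the level set `T = {x | α x = t}` is a finite union of classes, and
`α·g = α` iff `T g = T` for every such `T`. For a finite `S`-set `T`, the product of the simple
quantities of `T⁻¹` and `T` lies in `S`, so its coefficients are constant on classes; its
coefficient at `h` counts the `b ∈ T` with `b h⁻¹ ∈ T`, which is `|T|` exactly when `T h = T`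
(in characteristic zero this count is visible in `F`). Hence the right stabiliser of each `T`,
and so that of `α`, is a union of classes.
-/

open Finset
open scoped Pointwise

def Subgroup.rightStabilizer {G M : Type*} [Group G] [Monoid M] (f : G →* M) (m : M) :
    Subgroup G where
  carrier := {g | m * f g = m}
  one_mem' := by simp
  mul_mem' {a b} ha hb := by
    change m * f (a * b) = m
    rw [map_mul, ← mul_assoc, ha, hb]
  inv_mem' {a} ha := by
    change m * f a⁻¹ = m
    conv_lhs => rw [← ha]
    rw [mul_assoc, ← map_mul, mul_inv_cancel, map_one, mul_one]

namespace MonoidAlgebra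

variable {F G : Type*} [Semiring F]

open scoped Classical in
/-- Only meaningful for `t ≠ 0`: the level set of `0` is empty. -/
noncomputable def levelSet (α : MonoidAlgebra F G) (t : F) : Finset G :=
  α.coeff.support.filter (α.coeff · = t)

lemma mem_levelSet {α : MonoidAlgebra F G} {t : F} (ht : t ≠ 0) {x : G} :
    x ∈ α.levelSet t ↔ α.coeff x = t := by
  simp only [levelSet, mem_filter, Finsupp.mem_support_iff, and_iff_right_iff_imp]
  exact fun hx => hx ▸ ht

lemma forall_coeff_mul_eq_iff [Mul G] {α : MonoidAlgebra F G} {g : G} :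
    (∀ x, α.coeff (x * g) = α.coeff x) ↔
      ∀ t ≠ 0, ∀ x, x * g ∈ α.levelSet t ↔ x ∈ α.levelSet t := by
  refine ⟨fun h t ht x => by rw [mem_levelSet ht, mem_levelSet ht, h], fun h x => ?_⟩
  by_cases hx : α.coeff x = 0
  · rw [hx]
    by_contra hne
    have hx' := (mem_levelSet hne).mp ((h _ hne x).mp ((mem_levelSet hne).mpr rfl))
    exact hne (by rw [← hx', hx])
  · exact (mem_levelSet hx).mp ((h _ hx x).mpr ((mem_levelSet hx).mpr rfl))

lemma mul_of_eq_self_iff [Group G] {α : MonoidAlgebra F G} {g : G} :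
    α * of F G g = α ↔ ∀ x, α.coeff (x * g) = α.coeff x := by
  rw [← coeff_inj, Finsupp.ext_iff]
  simp only [of_apply, coeff_mul_single_apply, mul_one]
  exact ⟨fun h x => by simpa using (h (x * g)).symm, fun h x => by simpa using (h (x * g⁻¹)).symm⟩

end MonoidAlgebra

lemma coeff_simpleQuantity {F G : Type*} [Semiring F] [DecidableEq G] (C : Finset G) (x : G) :
    (simpleQuantity F C).coeff x = if x ∈ C then 1 else 0 := by
  simp [simpleQuantity, MonoidAlgebra.coeff_sum, Finsupp.finsetSum_apply,
    MonoidAlgebra.coeff_single, Finsupp.single_apply]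

lemma coeff_simpleQuantity_mul_simpleQuantity {F G : Type*} [Semiring F] [Group G]
    [DecidableEq G] (A B : Finset G) (h : G) :
    (simpleQuantity F A * simpleQuantity F B).coeff h = #(B.filter fun b => h * b⁻¹ ∈ A) := by
  rw [simpleQuantity.eq_1 F B, mul_sum, MonoidAlgebra.coeff_sum, Finsupp.finsetSum_apply]
  simp only [MonoidAlgebra.coeff_mul_single_apply, coeff_simpleQuantity, mul_one]
  exact sum_boole _ _

lemma Finset.card_filter_mul_inv_mem_eq_card_iff {G : Type*} [Group G] [DecidableEq G]
    (T : Finset G) (g : G) :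
    #(T.filter fun b => b * g⁻¹ ∈ T) = #T ↔ ∀ x, x * g ∈ T ↔ x ∈ T := by
  rw [card_filter_eq_iff]
  refine ⟨fun h x => ?_, fun h b hb => (h _).mp (by simpa)⟩
  have hmap : T.map (Equiv.mulRight g⁻¹).toEmbedding = T :=
    map_eq_of_subset fun _ hx => by
      obtain ⟨b, hb, rfl⟩ := mem_map.mp hx
      exact h b hb
  conv_rhs => rw [← hmap, mem_map_equiv]
  simp

namespace FinPartition

variable {G : Type*} (P : FinPartition G)

def IsSaturated (X : Set G) : Prop :=
  ∀ C ∈ P.classes, ∀ x ∈ C, ∀ y ∈ C, x ∈ X → y ∈ X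

noncomputable def classOf (g : G) : Finset G :=
  (P.existsUnique_mem g).exists.choose

lemma classOf_mem_classes (g : G) : P.classOf g ∈ P.classes :=
  (P.existsUnique_mem g).exists.choose_spec.1

lemma mem_classOf (g : G) : g ∈ P.classOf g :=
  (P.existsUnique_mem g).exists.choose_spec.2

lemma eq_of_mem_of_mem {C D : Finset G} (hC : C ∈ P.classes) (hD : D ∈ P.classes) {g : G}
    (hgC : g ∈ C) (hgD : g ∈ D) : C = D :=
  (P.existsUnique_mem g).unique ⟨hC, hgC⟩ ⟨hD, hgD⟩

lemma classOf_eq {C : Finset G} (hC : C ∈ P.classes) {g : G} (hg : g ∈ C) : P.classOf g = C :=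
  P.eq_of_mem_of_mem (P.classOf_mem_classes g) hC (P.mem_classOf g) hg

variable {P}

lemma IsSaturated.classOf_subset {X : Set G} (hX : P.IsSaturated X) {g : G} (hg : g ∈ X) :
    (P.classOf g : Set G) ⊆ X :=
  fun _ hy => hX _ (P.classOf_mem_classes g) g (P.mem_classOf g) _ hy hg

variable {F : Type*} [Field F]

lemma coeff_eq_of_mem_schurModule {α : MonoidAlgebra F G} (hα : α ∈ schurModule F P)
    {C : Finset G} (hC : C ∈ P.classes) {x y : G} (hx : x ∈ C) (hy : y ∈ C) :
    α.coeff x = α.coeff y := by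
  classical
  induction hα using Submodule.span_induction with
  | mem β hβ =>
    obtain ⟨D, hD, rfl⟩ := hβ
    have hxy : x ∈ D ↔ y ∈ D :=
      ⟨fun h => P.eq_of_mem_of_mem hC hD hx h ▸ hy, fun h => P.eq_of_mem_of_mem hC hD hy h ▸ hx⟩
    simp only [coeff_simpleQuantity, hxy]
  | zero => rfl
  | add β γ _ _ hβ hγ => simp only [MonoidAlgebra.coeff_add, Finsupp.add_apply, hβ, hγ]
  | smul a β _ hβ => simp only [MonoidAlgebra.coeff_smul, Finsupp.smul_apply, hβ]

lemma isSaturated_levelSet {α : MonoidAlgebra F G} (hα : α ∈ schurModule F P) {t : F}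
    (ht : t ≠ 0) : P.IsSaturated (α.levelSet t) := by
  intro C hC x hx y hy hxt
  rw [SetLike.mem_coe, MonoidAlgebra.mem_levelSet ht] at hxt ⊢
  rwa [← coeff_eq_of_mem_schurModule hα hC hx hy]

lemma simpleQuantity_mem_schurModule {T : Finset G} (hT : P.IsSaturated T) :
    simpleQuantity F T ∈ schurModule F P := by
  classical
  have hT_eq : T = (T.image P.classOf).biUnion id := by
    ext y
    simp only [mem_biUnion, mem_image, id, exists_exists_and_eq_and]
    exact ⟨fun hy => ⟨y, hy, P.mem_classOf y⟩, fun ⟨x, hx, hy⟩ => hT.classOf_subset hx hy⟩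
  have hdisj : (T.image P.classOf : Set (Finset G)).PairwiseDisjoint id := by
    intro C hC D hD hCD
    obtain ⟨x, -, rfl⟩ := mem_image.mp hC
    obtain ⟨y, -, rfl⟩ := mem_image.mp hD
    refine disjoint_left.mpr fun z hzx hzy => hCD ?_
    rw [← P.classOf_eq (P.classOf_mem_classes x) hzx, P.classOf_eq (P.classOf_mem_classes y) hzy]
  rw [hT_eq, simpleQuantity, sum_biUnion hdisj]
  refine Submodule.sum_mem _ fun C hC => Submodule.subset_span ?_
  obtain ⟨x, -, rfl⟩ := mem_image.mp hC
  exact ⟨_, P.classOf_mem_classes x, rfl⟩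

end FinPartition

namespace SchurRing

variable {F G : Type*} [Field F] [Group G] {S : SchurRing F G}

lemma mul_mem_carrier {α β : MonoidAlgebra F G} (hα : α ∈ S.carrier) (hβ : β ∈ S.carrier) :
    α * β ∈ S.carrier := by
  have hle : S.carrier * S.carrier ≤ S.carrier := by
    rw [SchurRing.carrier, schurModule, Submodule.span_mul_span, Submodule.span_le]
    rintro _ ⟨_, ⟨C, hC, rfl⟩, _, ⟨D, hD, rfl⟩, rfl⟩
    exact S.mul_mem C hC D hD
  exact hle (Submodule.mul_mem_mul hα hβ)

lemma isSaturated_inv {X : Set G} (hX : S.IsSaturated X) : S.IsSaturated X⁻¹ := by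
  intro C hC x hx y hy hxX
  obtain ⟨D, hD, hDC⟩ := S.inv_mem C hC
  exact hX D hD x⁻¹ ((hDC _).mpr (by simpa)) y⁻¹ ((hDC _).mpr (by simpa)) hxX

lemma isSSet_of_isSaturated {X : Set G} (hX : S.IsSaturated X) : IsSSet S X := by
  refine ⟨{C | C ∈ S.classes ∧ (C : Set G) ⊆ X}, fun C hC => hC.1, ?_⟩
  ext x
  simp only [Set.mem_iUnion, exists_prop]
  exact ⟨fun hx => ⟨_, ⟨S.classOf_mem_classes x, hX.classOf_subset hx⟩, S.mem_classOf x⟩,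
    fun ⟨_, ⟨_, hCX⟩, hxC⟩ => hCX hxC⟩

variable [CharZero F]

lemma isSaturated_setOf_forall_mul_mem_iff {T : Finset G} (hT : S.IsSaturated T) :
    S.IsSaturated {g | ∀ x, x * g ∈ T ↔ x ∈ T} := by
  classical
  intro C hC g hg c hc hgT
  have hTinv : S.IsSaturated (T⁻¹ : Finset G) := by
    rw [coe_inv]
    exact isSaturated_inv hT
  have hβ : simpleQuantity F T⁻¹ * simpleQuantity F T ∈ S.carrier :=
    mul_mem_carrier (S.simpleQuantity_mem_schurModule hTinv) (S.simpleQuantity_mem_schurModule hT)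
  have hcoeff (h : G) : (simpleQuantity F T⁻¹ * simpleQuantity F T).coeff h
      = #(T.filter fun b => b * h⁻¹ ∈ T) := by
    simp only [coeff_simpleQuantity_mul_simpleQuantity, mem_inv', mul_inv_rev, inv_inv]
  have hgc := S.coeff_eq_of_mem_schurModule hβ hC hg hc
  rw [hcoeff, hcoeff, Nat.cast_inj, (card_filter_mul_inv_mem_eq_card_iff T g).mpr hgT] at hgc
  exact (card_filter_mul_inv_mem_eq_card_iff T c).mp hgc.symm

lemma isSaturated_rightStabilizer {α : MonoidAlgebra F G} (hα : α ∈ S.carrier) :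
    S.IsSaturated (Subgroup.rightStabilizer (MonoidAlgebra.of F G) α) := by
  intro C hC g hg c hc hgα
  change α * MonoidAlgebra.of F G g = α at hgα
  change α * MonoidAlgebra.of F G c = α
  rw [MonoidAlgebra.mul_of_eq_self_iff, MonoidAlgebra.forall_coeff_mul_eq_iff] at hgα ⊢
  exact fun t ht => isSaturated_setOf_forall_mul_mem_iff (S.isSaturated_levelSet hα ht)
    C hC g hg c hc (hgα t ht)

end SchurRing

theorem stmt8 {F G : Type*} [Field F] [CharZero F] [Group G]
    (S : SchurRing F G) (α : MonoidAlgebra F G) (hα : α ∈ S.carrier) :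
    ∃ H : Subgroup G,
      (H : Set G) = {g : G | α * MonoidAlgebra.of F G g = α} ∧ IsSSet S (H : Set G) :=
  ⟨_, rfl, SchurRing.isSSet_of_isSaturated (SchurRing.isSaturated_rightStabilizer hα)⟩
end
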